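/- arXiv:1912.02865 — 3 statements merged into one kernel-verified Lean document; each statement's English description precedes it below -/
import Mathlib

section
/- If T is maximal p-cyclically monotone and also q-cyclically monotone for some q > p, then T is maximal q-cyclically monotone. -/
open scoped BigOperators

/-- The cyclic sum `∑_{i=0}^{p} ⟨x_{i+1} - x_i, x_i*⟩` (indices mod `p+1`). -/
def cycSum {X : Type*} [NormedAddCommGroup X] [NormedSpace ℝ X] (p : ℕ)
    (z : Fin (p + 1) → X × (X →L[ℝ] ℝ)) : ℝ :=
  ∑ i, (z i).2 ((z (i + 1)).1 - (z i).1)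

/-- `T` (identified with its graph) is `p`-cyclically monotone. -/
def CycMono {X : Type*} [NormedAddCommGroup X] [NormedSpace ℝ X] (p : ℕ)
    (T : Set (X × (X →L[ℝ] ℝ))) : Prop :=
  ∀ z : Fin (p + 1) → X × (X →L[ℝ] ℝ), (∀ i, z i ∈ T) → cycSum p z ≤ 0

/-- `T` is maximal `p`-cyclically monotone: it is `p`-cyclically monotone and its graph
is not properly contained in the graph of another `p`-cyclically monotone operator. -/
def MaxCycMono {X : Type*} [NormedAddCommGroup X] [NormedSpace ℝ X] (p : ℕ)
    (T : Set (X × (X →L[ℝ] ℝ))) : Prop :=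
  CycMono p T ∧ ∀ S : Set (X × (X →L[ℝ] ℝ)), CycMono p S → T ⊆ S → S = T

/-! Repeating the last point of a cycle adds the zero term `⟨x_p - x_p, x_p*⟩` and leaves the
closing term unchanged, so a cycle of length `p + 1` has the same cyclic sum as a padded one of
length `q + 1`. Hence `q`-cyclic monotonicity implies `p`-cyclic monotonicity for `p ≤ q`, and any
`q`-cyclically monotone extension of `T` is a `p`-cyclically monotone one, so it equals `T`. -/

section

variable {X : Type*} [NormedAddCommGroup X] [NormedSpace ℝ X]

theorem cycSum_snoc_last (p : ℕ) (z : Fin (p + 1) → X × (X →L[ℝ] ℝ)) :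
    cycSum (p + 1) (Fin.snoc (α := fun _ => X × (X →L[ℝ] ℝ)) z (z (Fin.last p))) =
      cycSum p z := by
  simp only [cycSum]
  rw [Fin.sum_univ_castSucc, Fin.sum_univ_castSucc, Fin.sum_univ_castSucc]
  simp only [Fin.coeSucc_eq_succ, Fin.succ_castSucc, Fin.snoc_castSucc, Fin.succ_last,
    Fin.snoc_last, Fin.last_add_one, sub_self, map_zero, add_zero]
  rw [← Fin.castSucc_zero', Fin.snoc_castSucc]

theorem CycMono.of_succ {p : ℕ} {T : Set (X × (X →L[ℝ] ℝ))} (hT : CycMono (p + 1) T) :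
    CycMono p T := fun z hz =>
  cycSum_snoc_last p z ▸ hT _ (Fin.lastCases (by simpa using hz _) (by simpa using hz))

theorem CycMono.of_le {p q : ℕ} (hpq : p ≤ q) {T : Set (X × (X →L[ℝ] ℝ))}
    (hT : CycMono q T) : CycMono p T := by
  induction q, hpq using Nat.le_induction with
  | base => exact hT
  | succ q _ ih => exact ih hT.of_succ

end

theorem maxCycMono_of_gt {X : Type*} [NormedAddCommGroup X] [NormedSpace ℝ X]
    (p q : ℕ) (T : Set (X × (X →L[ℝ] ℝ)))
    (hT : MaxCycMono p T) (hpq : p < q) (hq : CycMono q T) : MaxCycMono q T :=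
  ⟨hq, fun S hS hTS => hT.2 S (hS.of_le hpq.le) hTS⟩
end

section
/- Let S: X ⇉ X* be a p-cyclically monotone operator, let a ∈ dom(S^{μ_p}), and define T by graph(T) = ({a} × S^{μ_p}(a)) ∪ graph(S). Then T is p-cyclically monotone. -/
open scoped BigOperators

/-- The `p`-cyclically monotone polar of `T`: all pairs `(x₀, x₀*)` such that every cycle
starting at `(x₀, x₀*)` with the remaining `p` points in `T` has cyclic sum `≤ 0`. -/
def cycPolar {X : Type*} [NormedAddCommGroup X] [NormedSpace ℝ X] (p : ℕ)
    (T : Set (X × (X →L[ℝ] ℝ))) : Set (X × (X →L[ℝ] ℝ)) :=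
  {w | ∀ z : Fin (p + 1) → X × (X →L[ℝ] ℝ),
    z 0 = w → (∀ i, i ≠ 0 → z i ∈ T) → cycSum p z ≤ 0}

/-- Domain of a multivalued operator (graph). -/
def opDom {X Y : Type*} (T : Set (X × Y)) : Set X := {x | ∃ y, (x, y) ∈ T}

/-- Image of a multivalued operator (graph) at a point. -/
def opIm {X Y : Type*} (T : Set (X × Y)) (x : X) : Set Y := {y | (x, y) ∈ T}

/-!
All points of the cycle that lie over `a` share the base point `a`, so cutting the cycle there
splits its sum into the sums of sub-cycles, each made of one point of the polar followed by at
most `p` points of `S`. Repeating a point of a cycle does not change its sum, so each sub-cycle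
can be padded to length `p + 1`, and the definition of the polar bounds its sum by `0`.
A cycle without points over `a` lies in `S`.
-/

section ListSums

variable {X F : Type*} [AddGroup X] [FunLike F X ℝ]

def chainSum : List (X × F) → X → ℝ
  | [], _ => 0
  | [c], x => c.2 (x - c.1)
  | c :: d :: l, x => c.2 (d.1 - c.1) + chainSum (d :: l) x

def loopSum : List (X × F) → ℝ
  | [] => 0
  | c :: l => chainSum (c :: l) c.1

theorem chainSum_append (l₁ : List (X × F)) (c : X × F) (l₂ : List (X × F)) (x : X) :
    chainSum (l₁ ++ c :: l₂) x = chainSum l₁ c.1 + chainSum (c :: l₂) x := by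
  induction l₁ with
  | nil => simp [chainSum]
  | cons d t ih =>
    cases t with
    | nil => simp [chainSum]
    | cons e t => simp only [List.cons_append, chainSum] at ih ⊢; rw [ih]; ring

theorem loopSum_cons_append_of_fst_eq {w b : X × F} (h : w.1 = b.1) (l₁ l₂ : List (X × F)) :
    loopSum (w :: (l₁ ++ b :: l₂)) = loopSum (w :: l₁) + loopSum (b :: l₂) := by
  simp only [loopSum, ← List.cons_append, chainSum_append, h]

variable [ZeroHomClass F X ℝ]

theorem chainSum_replicate_self (n : ℕ) (c : X × F) :
    chainSum (List.replicate n c) c.1 = 0 := by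
  induction n with
  | zero => rfl
  | succ n ih =>
    cases n with
    | zero => simp [chainSum]
    | succ n => simpa [List.replicate_succ, chainSum] using ih

theorem loopSum_singleton (c : X × F) : loopSum [c] = 0 := by
  simp [loopSum, chainSum]

theorem loopSum_cons_replicate_append (w b : X × F) (k : ℕ) (l : List (X × F)) :
    loopSum (w :: (List.replicate k b ++ b :: l)) = loopSum (w :: b :: l) := by
  have hpad : chainSum (w :: List.replicate k b) b.1 = chainSum [w] b.1 := by
    cases k with
    | zero => rfl
    | succ k =>
      rw [List.replicate_succ, ← List.singleton_append, chainSum_append,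
        ← List.replicate_succ, chainSum_replicate_self, add_zero]
  rw [loopSum, ← List.cons_append, chainSum_append, hpad, ← chainSum_append]
  rfl

end ListSums

section CycSum

variable {X : Type*} [NormedAddCommGroup X] [NormedSpace ℝ X]

theorem chainSum_ofFn {n : ℕ} (z : Fin (n + 1) → X × (X →L[ℝ] ℝ)) (x : X) :
    chainSum (List.ofFn z) x =
      ∑ i : Fin n, (z i.castSucc).2 ((z i.succ).1 - (z i.castSucc).1)
        + (z (Fin.last n)).2 (x - (z (Fin.last n)).1) := by
  induction n with
  | zero => simp [chainSum]
  | succ n ih =>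
    rw [List.ofFn_succ, List.ofFn_succ (f := fun i => z i.succ), chainSum,
      ← List.ofFn_succ (f := fun i => z i.succ), ih (fun i => z i.succ),
      Fin.sum_univ_succ]
    simp only [Fin.succ_last, Fin.succ_castSucc, Fin.castSucc_zero, Fin.succ_zero_eq_one]
    ring

theorem cycSum_eq_loopSum (p : ℕ) (z : Fin (p + 1) → X × (X →L[ℝ] ℝ)) :
    cycSum p z = loopSum (List.ofFn z) := by
  rw [List.ofFn_succ, loopSum, ← List.ofFn_succ, chainSum_ofFn, cycSum, Fin.sum_univ_castSucc,
    Fin.last_add_one]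
  simp only [Fin.coeSucc_eq_succ]

theorem cycSum_comp_add_right (p : ℕ) (z : Fin (p + 1) → X × (X →L[ℝ] ℝ)) (k : Fin (p + 1)) :
    cycSum p (fun i => z (i + k)) = cycSum p z := by
  unfold cycSum
  exact Fintype.sum_equiv (Equiv.addRight k) _ _ fun i => by simp [add_right_comm]

end CycSum

section Polar

variable {X : Type*} [NormedAddCommGroup X] [NormedSpace ℝ X] {p : ℕ}
  {S : Set (X × (X →L[ℝ] ℝ))}

theorem loopSum_cons_le_zero_of_mem_cycPolar {w : X × (X →L[ℝ] ℝ)} (hw : w ∈ cycPolar p S)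
    {l : List (X × (X →L[ℝ] ℝ))} (hl : ∀ u ∈ l, u ∈ S) (hlen : l.length = p) :
    loopSum (w :: l) ≤ 0 := by
  subst hlen
  let z : Fin (l.length + 1) → X × (X →L[ℝ] ℝ) := Fin.cons w l.get
  have hz : List.ofFn z = w :: l := by simp [z, List.ofFn_succ]
  rw [← hz, ← cycSum_eq_loopSum]
  refine hw z rfl fun i hi => ?_
  obtain ⟨j, rfl⟩ := Fin.exists_succ_eq.mpr hi
  exact hl _ (List.getElem_mem _)

theorem loopSum_cons_le_zero_of_length_le {w : X × (X →L[ℝ] ℝ)} (hw : w ∈ cycPolar p S)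
    {l : List (X × (X →L[ℝ] ℝ))} (hl : ∀ u ∈ l, u ∈ S) (hlen : l.length ≤ p) :
    loopSum (w :: l) ≤ 0 := by
  cases l with
  | nil => exact (loopSum_singleton w).le
  | cons b t =>
    rw [← loopSum_cons_replicate_append w b (p - (t.length + 1))]
    refine loopSum_cons_le_zero_of_mem_cycPolar hw (fun u hu => ?_) ?_
    · rcases List.mem_append.mp hu with hu | hu
      · rw [List.eq_of_mem_replicate hu]
        exact hl b List.mem_cons_self
      · exact hl u hu
    · simp only [List.length_cons, List.length_append, List.length_replicate] at hlen ⊢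
      omega

theorem mem_cycPolar_of_mem_fiber {a : X} {u : X × (X →L[ℝ] ℝ)}
    (hu : u ∈ ({a} : Set X) ×ˢ opIm (cycPolar p S) a) : u ∈ cycPolar p S := by
  obtain ⟨h₁, h₂⟩ := hu
  rw [Set.mem_singleton_iff] at h₁
  rwa [opIm, Set.mem_ofPred_eq, ← h₁] at h₂

theorem loopSum_cons_append_le_zero {a : X} {w : X × (X →L[ℝ] ℝ)}
    (hw : w ∈ ({a} : Set X) ×ˢ opIm (cycPolar p S) a) {s l : List (X × (X →L[ℝ] ℝ))}
    (hs : ∀ u ∈ s, u ∈ S) (hl : ∀ u ∈ l, u ∈ ({a} ×ˢ opIm (cycPolar p S) a) ∪ S)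
    (hlen : s.length + l.length ≤ p) :
    loopSum (w :: (s ++ l)) ≤ 0 := by
  -- `s` collects the points of `S` met since the last point over `a`
  induction l generalizing w s with
  | nil =>
    rw [List.append_nil]
    exact loopSum_cons_le_zero_of_length_le (mem_cycPolar_of_mem_fiber hw) hs (by simpa using hlen)
  | cons c l ih =>
    have hl' : ∀ u ∈ l, u ∈ ({a} ×ˢ opIm (cycPolar p S) a) ∪ S := fun u hu => hl u (List.mem_cons_of_mem c hu)
    simp only [List.length_cons] at hlen
    rcases hl c List.mem_cons_self with hcQ | hcS
    · rw [loopSum_cons_append_of_fst_eq (hw.1.trans hcQ.1.symm)]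
      have h₁ := loopSum_cons_le_zero_of_length_le (mem_cycPolar_of_mem_fiber hw) hs (by omega)
      have h₂ := ih hcQ (s := []) (List.forall_mem_nil _) hl'
        (by simp only [List.length_nil]; omega)
      simp only [List.nil_append] at h₂
      linarith
    · simpa using ih hw (s := s ++ [c]) (by simpa [or_imp, forall_and] using And.intro hs hcS) hl'
        (by simp only [List.length_append, List.length_singleton]; omega)

end Polar

theorem cycMono_union_polar_fiber_general {X : Type*} [NormedAddCommGroup X] [NormedSpace ℝ X]
    (p : ℕ) (S : Set (X × (X →L[ℝ] ℝ))) (hS : CycMono p S) (a : X) :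
    CycMono p (({a} ×ˢ opIm (cycPolar p S) a) ∪ S) := by
  intro z hz
  by_cases hzS : ∀ i, z i ∈ S
  · exact hS z hzS
  obtain ⟨k, hk⟩ := not_forall.mp hzS
  rw [← cycSum_comp_add_right p z k, cycSum_eq_loopSum, List.ofFn_succ]
  have hl : ∀ u ∈ List.ofFn (fun i : Fin p => z (i.succ + k)),
      u ∈ ({a} ×ˢ opIm (cycPolar p S) a) ∪ S := by
    intro u hu
    obtain ⟨i, rfl⟩ := List.mem_ofFn.mp hu
    exact hz _
  simpa using loopSum_cons_append_le_zero (s := []) (by simpa using (hz k).resolve_right hk)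
    (List.forall_mem_nil _) hl (by simp)

theorem cycMono_union_polar_fiber {X : Type*} [NormedAddCommGroup X] [NormedSpace ℝ X]
    (p : ℕ) (S : Set (X × (X →L[ℝ] ℝ))) (hS : CycMono p S) (a : X)
    (ha : a ∈ opDom (cycPolar p S)) :
    CycMono p (({a} ×ˢ opIm (cycPolar p S) a) ∪ S) :=
  cycMono_union_polar_fiber_general p S hS a
end

section
/- Let x_1,...,x_n ∈ X, C = co({x_1,...,x_n}), S_n = {λ ∈ ℝ^n : λ_i ≥ 0, ∑λ_i = 1}, and F: S_n → C defined by F(λ) = ∑_{i=1}^n λ_i x_i. Then F is an open map: for every U ⊆ S_n open in the subspace topology of S_n, F(U) is open in the subspace topology of C. -/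
/-!
For `c` in `C = F(S)` pick a point `g c` of the fibre `S ∩ F⁻¹{c}` nearest to `λ`. By compactness
of `S` it suffices that `λ` is the only cluster point of `g c` as `c → F λ` within `C`. A cluster
point `m` lies in the fibre of `F λ`, so `F` kills `(λ - m) / 2`; since `S` is a polytope,
translating `g c` by this vector stays in `S` once `g c` is near `m`, and stays in the fibre of
`c`. Minimality of `g c` then gives `dist m λ ≤ dist (m + (λ - m) / 2) λ = dist m λ / 2`.
-/

open Set Filter Topology

theorem exists_isOpen_eq_inter_of_forall_mem_nhdsWithin {α : Type*} [TopologicalSpace α]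
    {s t : Set α} (hst : s ⊆ t) (h : ∀ a ∈ s, s ∈ 𝓝[t] a) :
    ∃ u : Set α, IsOpen u ∧ s = u ∩ t := by
  refine ⟨interior {y | y ∈ t → y ∈ s}, isOpen_interior, ?_⟩
  refine Subset.antisymm (fun a ha => ⟨?_, hst ha⟩) fun a ⟨ha, hat⟩ => interior_subset ha hat
  exact mem_interior_iff_mem_nhds.2 (mem_nhdsWithin_iff_eventually.1 (h a ha))

section StdSimplex

variable {ι : Type*} [Fintype ι]

theorem add_smul_sub_mem_stdSimplex {μ m l : ι → ℝ} {t : ℝ} (hμ : μ ∈ stdSimplex ℝ ι)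
    (hm : ∑ i, m i = 1) (hl : l ∈ stdSimplex ℝ ι) (ht : 0 ≤ t) (htμ : ∀ i, t * m i ≤ μ i) :
    μ + t • (l - m) ∈ stdSimplex ℝ ι := by
  refine ⟨fun i => ?_, ?_⟩
  · have := mul_nonneg ht (hl.1 i)
    simp only [Pi.add_apply, Pi.smul_apply, Pi.sub_apply, smul_eq_mul]
    linarith [htμ i]
  · simp [Finset.sum_add_distrib, ← Finset.mul_sum, hμ.2, hm, hl.2]

theorem eventually_add_smul_sub_mem_stdSimplex {m l : ι → ℝ} {t : ℝ}
    (hm : m ∈ stdSimplex ℝ ι) (hl : l ∈ stdSimplex ℝ ι) (ht₀ : 0 ≤ t) (ht₁ : t < 1) :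
    ∀ᶠ μ in 𝓝[stdSimplex ℝ ι] m, μ + t • (l - m) ∈ stdSimplex ℝ ι := by
  have hclose : ∀ᶠ μ in 𝓝 m, ∀ i, 0 < m i → t * m i < μ i :=
    eventually_all.2 fun i => (eventually_imp_distrib_left).2 fun hi =>
      continuousAt_const.eventually_lt (continuous_apply i).continuousAt
        (mul_lt_of_lt_one_left hi ht₁)
  filter_upwards [self_mem_nhdsWithin, mem_nhdsWithin_of_mem_nhds hclose] with μ hμ hμm
  refine add_smul_sub_mem_stdSimplex hμ hm.2 hl ht₀ fun i => ?_
  rcases (hm.1 i).eq_or_lt with hi | hi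
  · simpa [← hi] using hμ.1 i
  · exact (hμm i hi).le

theorem image_linearCombination_stdSimplex {R E : Type*} [Field R] [LinearOrder R]
    [IsStrictOrderedRing R] [AddCommGroup E] [Module R E] (v : ι → E) :
    Fintype.linearCombination R v '' stdSimplex R ι = convexHull R (range v) := by
  classical
  rw [← convexHull_basis_eq_stdSimplex, LinearMap.image_convexHull, ← range_comp]
  congr 1
  ext i
  simp [Fintype.linearCombination_apply, ite_smul]

variable {E : Type*} [AddCommGroup E] [Module ℝ E] [TopologicalSpace E] [IsTopologicalAddGroup E]
  [ContinuousSMul ℝ E] [T2Space E]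

theorem exists_isMinOn_dist_stdSimplex_inter_fiber (f : (ι → ℝ) →ₗ[ℝ] E) (l : ι → ℝ) {c : E}
    (hc : c ∈ f '' stdSimplex ℝ ι) :
    ∃ μ ∈ stdSimplex ℝ ι ∩ f ⁻¹' {c}, IsMinOn (dist · l) (stdSimplex ℝ ι ∩ f ⁻¹' {c}) μ := by
  obtain ⟨μ, hμ, rfl⟩ := hc
  exact ((isCompact_stdSimplex ℝ ι).inter_right
      (isClosed_singleton.preimage f.continuous_of_finiteDimensional)).exists_isMinOn
    ⟨μ, hμ, rfl⟩ (continuous_id.dist continuous_const).continuousOn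

theorem tendsto_nhdsWithin_of_isMinOn_dist_stdSimplex_inter_fiber (f : (ι → ℝ) →ₗ[ℝ] E)
    {l : ι → ℝ} (hl : l ∈ stdSimplex ℝ ι) {g : E → ι → ℝ}
    (hg : ∀ c ∈ f '' stdSimplex ℝ ι, g c ∈ stdSimplex ℝ ι ∩ f ⁻¹' {c} ∧
      IsMinOn (dist · l) (stdSimplex ℝ ι ∩ f ⁻¹' {c}) (g c)) :
    Tendsto g (𝓝[f '' stdSimplex ℝ ι] (f l)) (𝓝[stdSimplex ℝ ι] l) := by
  have hgS : ∀ᶠ c in 𝓝[f '' stdSimplex ℝ ι] (f l), g c ∈ stdSimplex ℝ ι :=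
    eventually_nhdsWithin_of_forall fun c hc => (hg c hc).1.1
  refine tendsto_nhdsWithin_iff.2 ⟨?_, hgS⟩
  refine (isCompact_stdSimplex ℝ ι).tendsto_nhds_of_unique_mapClusterPt hgS fun m hm hcl => ?_
  obtain ⟨U, hU, hgU⟩ := mapClusterPt_iff_ultrafilter.1 hcl
  have hC : ∀ᶠ c in U, c ∈ f '' stdSimplex ℝ ι := hU self_mem_nhdsWithin
  have hfm : f m = f l := by
    have hfg : Tendsto (f ∘ g) U (𝓝 (f l)) :=
      (tendsto_id.mono_left (hU.trans nhdsWithin_le_nhds)).congr' <| by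
        filter_upwards [hC] with c hc using ((hg c hc).1.2).symm
    exact tendsto_nhds_unique ((f.continuous_of_finiteDimensional.tendsto m).comp hgU) hfg
  set w : ι → ℝ := (2⁻¹ : ℝ) • (l - m)
  have hfw : f w = 0 := by simp [w, hfm]
  have hstep : ∀ᶠ c in U, dist (g c) l ≤ dist (g c + w) l := by
    have hgm : Tendsto g U (𝓝[stdSimplex ℝ ι] m) := tendsto_nhdsWithin_iff.2 ⟨hgU, hU hgS⟩
    filter_upwards [hgm.eventually (eventually_add_smul_sub_mem_stdSimplex (t := 2⁻¹) hm hl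
      (by norm_num) (by norm_num)), hC] with c hcw hc
    obtain ⟨⟨-, hgc⟩, hmin⟩ := hg c hc
    exact hmin ⟨hcw, by simpa [hfw] using hgc⟩
  have hlim : dist m l ≤ dist (m + w) l :=
    le_of_tendsto_of_tendsto (hgU.dist tendsto_const_nhds)
      ((hgU.add_const w).dist tendsto_const_nhds) hstep
  have hhalf : dist (m + w) l = 2⁻¹ * dist m l := by
    rw [dist_eq_norm, dist_eq_norm, show m + w - l = (2⁻¹ : ℝ) • (m - l) by module, norm_smul]
    norm_num
  exact dist_le_zero.1 (by linarith [dist_nonneg (x := m) (y := l)])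

theorem map_nhdsWithin_stdSimplex (f : (ι → ℝ) →ₗ[ℝ] E) {l : ι → ℝ} (hl : l ∈ stdSimplex ℝ ι) :
    map f (𝓝[stdSimplex ℝ ι] l) = 𝓝[f '' stdSimplex ℝ ι] (f l) := by
  refine le_antisymm (f.continuous_of_finiteDimensional.continuousWithinAt.tendsto_nhdsWithin
    (mapsTo_image f _)) fun A hA => ?_
  choose! g hg using fun c (hc : c ∈ f '' stdSimplex ℝ ι) =>
    exists_isMinOn_dist_stdSimplex_inter_fiber f l hc
  filter_upwards [(tendsto_nhdsWithin_of_isMinOn_dist_stdSimplex_inter_fiber f hl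
    hg).eventually hA, self_mem_nhdsWithin] with c hcA hc
  rwa [← show f (g c) = c from (hg c hc).1.2]

end StdSimplex

/-- The convex-combination map `λ ↦ ∑ᵢ λᵢ xᵢ` from the simplex
`Sₙ = {λ : λᵢ ≥ 0, ∑ λᵢ = 1}` onto `C = co{x₁,…,xₙ}` is an open map:
the image of any relatively open subset of `Sₙ` is relatively open in `C`. -/
theorem convexCombination_isOpenMap {X : Type*} [NormedAddCommGroup X] [NormedSpace ℝ X]
    (n : ℕ) (x : Fin n → X) :
    ∀ U ⊆ {l : Fin n → ℝ | (∀ i, 0 ≤ l i) ∧ ∑ i, l i = 1},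
      (∃ V : Set (Fin n → ℝ), IsOpen V ∧
        U = V ∩ {l : Fin n → ℝ | (∀ i, 0 ≤ l i) ∧ ∑ i, l i = 1}) →
      ∃ W : Set X, IsOpen W ∧
        (fun l : Fin n → ℝ => ∑ i, l i • x i) '' U = W ∩ convexHull ℝ (Set.range x) := by
  rintro _ - ⟨V, hV, rfl⟩
  change ∃ W, IsOpen W ∧
    Fintype.linearCombination ℝ x '' (V ∩ stdSimplex ℝ (Fin n)) = W ∩ convexHull ℝ (range x)
  rw [← image_linearCombination_stdSimplex]
  refine exists_isOpen_eq_inter_of_forall_mem_nhdsWithin (image_mono inter_subset_right) ?_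
  rintro _ ⟨l, hl, rfl⟩
  rw [← map_nhdsWithin_stdSimplex _ hl.2]
  exact image_mem_map <|
    inter_mem (mem_nhdsWithin_of_mem_nhds (hV.mem_nhds hl.1)) self_mem_nhdsWithin
end
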